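/- Let α ≥ 0 and let f = h + conj(g) ∈ W⁰_H(α), with coefficients a_n, b_n (n ≥ 2). Then for every n ≥ 2: (i) |a_n| + |b_n| ≤ 2/(αn² + n(1−α)); (ii) ||a_n| − |b_n|| ≤ 2/(αn² + n(1−α)); (iii) |a_n| ≤ 2/(αn² + n(1−α)). -/

import Mathlib

/-!
Fix a unimodular `ε`. The coefficients of `F = (h' + α z h'') + ε (g' + α z g'')` are
`w (n - 1) = n (1 + α (n - 1)) (a n + ε b n)`, with `w 0 = 1`, and the defining inequality of
`W⁰_H(α)` says `Re F > 0` on the disc. Carathéodory's lemma `‖w k‖ ≤ 2 Re w 0` then bounds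
`‖a n + ε b n‖`, and choosing `ε` so that `ε b n` points in the direction of `a n` turns this into
the bound on `‖a n‖ + ‖b n‖`, from which the other two follow.

Carathéodory's lemma is proved on circles of radius `r < 1`: there `conj z ^ k = r ^ (2k) z⁻ᵏ`,
so averaging `conj z ^ k (F + conj F) = 2 conj z ^ k Re F` extracts `r ^ (2k) w k`, the
`conj F` part contributing `conj (mean of z ^ k F) = 0`; the average of `|2 conj z ^ k Re F|`
is `2 r ^ k Re F 0` by the mean value property, because `Re F ≥ 0`.
-/

open Complex Metric FormalMultilinearSeries Filter Topology Real
open scoped NNReal ComplexConjugate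

section PowerSeries

variable {c : ℕ → ℂ} {f : ℂ → ℂ} {R : ℝ≥0}

theorem hasFPowerSeriesOnBall_ofScalars_of_hasSum (hR : 0 < R)
    (hs : ∀ z ∈ ball (0 : ℂ) R, HasSum (fun n ↦ c n * z ^ n) (f z)) :
    HasFPowerSeriesOnBall f (ofScalars ℂ c) 0 R where
  r_le := by
    refine ENNReal.le_of_forall_nnreal_lt fun r hr ↦ ?_
    have hr' : ((r : ℝ) : ℂ) ∈ ball (0 : ℂ) R := by
      simpa [Complex.norm_of_nonneg r.coe_nonneg] using hr
    refine le_radius_of_tendsto _ (l := 0) ?_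
    simpa [ofScalars_norm, Complex.norm_of_nonneg r.coe_nonneg] using
      (hs _ hr').summable.tendsto_atTop_zero.norm
  r_pos := by simpa using hR
  hasSum {z} hz := by
    rw [Metric.eball_coe] at hz
    simpa [ofScalars_apply_eq, mul_comm] using hs z (by simpa using hz)

theorem hasSum_deriv_of_hasSum (hR : 0 < R)
    (hs : ∀ z ∈ ball (0 : ℂ) R, HasSum (fun n ↦ c n * z ^ n) (f z)) :
    ∀ z ∈ ball (0 : ℂ) R, HasSum (fun n ↦ (n + 1) * c (n + 1) * z ^ n) (deriv f z) := by
  intro z hz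
  have hf := (hasFPowerSeriesOnBall_ofScalars_of_hasSum hR hs).fderiv
  have := (hf.hasSum (by rwa [Metric.eball_coe])).mapL (ContinuousLinearMap.apply ℂ ℂ 1)
  simp only [zero_add, ContinuousLinearMap.apply_apply, fderiv_apply_one_eq_deriv] at this
  refine this.congr_fun fun n ↦ ?_
  rw [apply_eq_pow_smul_coeff]
  simp only [_root_.smul_apply, derivSeries_coeff_one, coeff_ofScalars, nsmul_eq_mul,
    Nat.cast_add, Nat.cast_one, smul_eq_mul]
  ring

theorem hasSum_deriv_add_mul_deriv_deriv_of_hasSum (hR : 0 < R) (α : ℂ)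
    (hs : ∀ z ∈ ball (0 : ℂ) R, HasSum (fun n ↦ c n * z ^ n) (f z)) :
    ∀ z ∈ ball (0 : ℂ) R, HasSum (fun n ↦ (n + 1) * (1 + α * n) * c (n + 1) * z ^ n)
      (deriv f z + α * z * deriv (deriv f) z) := by
  intro z hz
  have hf' := hasSum_deriv_of_hasSum hR hs z hz
  have hf'' := hasSum_deriv_of_hasSum hR (hasSum_deriv_of_hasSum hR hs) z hz
  have hzf'' :
      HasSum (fun n ↦ α * n * (n + 1) * c (n + 1) * z ^ n) (α * z * deriv (deriv f) z) := by
    refine (hasSum_nat_add_iff' 1).mp ?_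
    simpa [pow_succ, mul_assoc, mul_comm, mul_left_comm] using hf''.mul_left (α * z)
  refine (hf'.add hzf'').congr_fun fun n ↦ ?_
  ring

end PowerSeries

theorem norm_circleAverage_le {E : Type*} [NormedAddCommGroup E] [NormedSpace ℝ E]
    {f : ℂ → E} {c : ℂ} {R : ℝ} :
    ‖circleAverage f c R‖ ≤ circleAverage (fun z ↦ ‖f z‖) c R := by
  rw [circleAverage, circleAverage, norm_smul, smul_eq_mul, norm_inv,
    Real.norm_of_nonneg two_pi_pos.le]
  gcongr
  exact intervalIntegral.norm_integral_le_integral_norm two_pi_pos.le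

section Caratheodory

variable {F : ℂ → ℂ} {p : FormalMultilinearSeries ℂ ℂ ℂ} {r : ℝ}

theorem circleAverage_inv_pow_mul_eq_coeff (hp : HasFPowerSeriesAt F p 0) (hr : 0 < r)
    (hF : DifferentiableOn ℂ F (closedBall 0 r)) (n : ℕ) :
    circleAverage (fun z ↦ z⁻¹ ^ n * F z) 0 r = p.coeff n := by
  lift r to ℝ≥0 using hr.le
  have hc := hF.hasFPowerSeriesOnBall (by exact_mod_cast hr)
  rw [hp.eq_formalMultilinearSeries hc.hasFPowerSeriesAt, FormalMultilinearSeries.coeff]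
  refine Eq.trans ?_ (cauchyPowerSeries_apply F 0 r n 1).symm
  rw [circleAverage_eq_circleIntegral hr.ne']
  simp only [sub_zero, inv_pow, smul_eq_mul, one_div]
  ring_nf

theorem conj_pow_eq_of_mem_sphere {z : ℂ} (hz : z ∈ sphere (0 : ℂ) r) (hr : r ≠ 0) (n : ℕ) :
    conj z ^ n = (r : ℂ) ^ (2 * n) * z⁻¹ ^ n := by
  have hz0 : z ≠ 0 := ne_of_mem_sphere hz (by simpa using hr)
  rw [mem_sphere_zero_iff_norm] at hz
  rw [pow_mul, ← mul_pow]
  congr 1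
  rw [← hz, ← mul_conj', mul_comm z, mul_assoc, mul_inv_cancel₀ hz0, mul_one]

theorem circleAverage_conj_pow_mul_eq (hp : HasFPowerSeriesAt F p 0) (hr : 0 < r)
    (hF : DifferentiableOn ℂ F (closedBall 0 r)) (n : ℕ) :
    circleAverage (fun z ↦ conj z ^ n * F z) 0 r = r ^ (2 * n) * p.coeff n := by
  rw [← circleAverage_inv_pow_mul_eq_coeff hp hr hF, ← smul_eq_mul, ← circleAverage_fun_smul]
  refine circleAverage_congr_sphere fun z hz ↦ ?_
  rw [abs_of_pos hr] at hz
  simp only [smul_eq_mul, conj_pow_eq_of_mem_sphere hz hr.ne', mul_assoc]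

theorem circleAverage_conj_pow_mul_conj_eq_zero (hr : 0 < r)
    (hF : DifferentiableOn ℂ F (closedBall 0 r)) {n : ℕ} (hn : n ≠ 0) :
    circleAverage (fun z ↦ conj z ^ n * conj (F z)) 0 r = 0 := by
  have hd : DiffContOnCl ℂ (fun z ↦ z ^ n * F z) (ball 0 |r|) := by
    apply DifferentiableOn.diffContOnCl
    rw [abs_of_pos hr, closure_ball _ hr.ne']
    exact (differentiableOn_pow n).mul hF
  have hi : CircleIntegrable (fun z ↦ z ^ n * F z) 0 r :=
    (((continuousOn_pow n).mul hF.continuousOn).mono sphere_subset_closedBall).circleIntegrable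
      hr.le
  have := (conjCLE : ℂ ≃L[ℝ] ℂ).toContinuousLinearMap.circleAverage_comp_comm hi
  simp only [Function.comp_def, ContinuousLinearEquiv.coe_coe, conjCLE_apply, map_mul,
    map_pow] at this
  rw [this, hd.circleAverage]
  simp [hn]

theorem circleAverage_re_eq_re_of_differentiableOn (hr : 0 < r)
    (hF : DifferentiableOn ℂ F (closedBall 0 r)) :
    circleAverage (fun z ↦ (F z).re) 0 r = (F 0).re := by
  have hd : DiffContOnCl ℂ F (ball 0 |r|) :=
    DifferentiableOn.diffContOnCl (by rwa [abs_of_pos hr, closure_ball _ hr.ne'])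
  have hi : CircleIntegrable F 0 r :=
    (hF.continuousOn.mono sphere_subset_closedBall).circleIntegrable hr.le
  rw [← hd.circleAverage]
  exact reCLM.circleAverage_comp_comm hi

theorem pow_mul_norm_coeff_le_two_mul_re (hp : HasFPowerSeriesAt F p 0) (hr : 0 < r)
    (hF : DifferentiableOn ℂ F (closedBall 0 r)) (hre : ∀ z ∈ sphere (0 : ℂ) r, 0 ≤ (F z).re)
    {n : ℕ} (hn : n ≠ 0) :
    r ^ n * ‖p.coeff n‖ ≤ 2 * (F 0).re := by
  have hFc : ContinuousOn F (sphere 0 r) := hF.continuousOn.mono sphere_subset_closedBall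
  have hconj : ContinuousOn (fun z ↦ conj z ^ n) (sphere (0 : ℂ) r) := by fun_prop
  have hsum : circleAverage (fun z ↦ conj z ^ n * (2 * (F z).re : ℂ)) 0 r
      = r ^ (2 * n) * p.coeff n := calc
    _ = circleAverage (fun z ↦ conj z ^ n * F z) 0 r
        + circleAverage (fun z ↦ conj z ^ n * conj (F z)) 0 r := by
      have hi₁ : CircleIntegrable (fun z ↦ conj z ^ n * F z) 0 r :=
        (hconj.mul hFc).circleIntegrable hr.le
      have hi₂ : CircleIntegrable (fun z ↦ conj z ^ n * conj (F z)) 0 r :=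
        (hconj.mul (continuous_conj.comp_continuousOn hFc)).circleIntegrable hr.le
      rw [← circleAverage_fun_add hi₁ hi₂]
      simp only [← mul_add, add_conj, ofReal_mul, ofReal_ofNat]
    _ = r ^ (2 * n) * p.coeff n := by
      rw [circleAverage_conj_pow_mul_eq hp hr hF,
        circleAverage_conj_pow_mul_conj_eq_zero hr hF hn, add_zero]
  have hnorm : ∀ z ∈ sphere (0 : ℂ) |r|,
      ‖conj z ^ n * (2 * (F z).re : ℂ)‖ = r ^ n * 2 * (F z).re := by
    intro z hz
    rw [abs_of_pos hr] at hz
    rw [norm_mul, norm_pow, norm_conj, mem_sphere_zero_iff_norm.mp hz, mul_assoc]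
    norm_cast
    rw [Real.norm_of_nonneg (by linarith [hre z hz])]
  have key : r ^ n * (r ^ n * ‖p.coeff n‖) ≤ r ^ n * (2 * (F 0).re) := calc
    r ^ n * (r ^ n * ‖p.coeff n‖) = ‖(r : ℂ) ^ (2 * n) * p.coeff n‖ := by
      rw [norm_mul, norm_pow, norm_real, Real.norm_of_nonneg hr.le, pow_mul']; ring
    _ ≤ circleAverage (fun z ↦ ‖conj z ^ n * (2 * (F z).re : ℂ)‖) 0 r := by
      rw [← hsum]; exact norm_circleAverage_le
    _ = circleAverage (fun z ↦ (r ^ n * 2) • (F z).re) 0 r := circleAverage_congr_sphere hnorm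
    _ = r ^ n * (2 * (F 0).re) := by
      rw [circleAverage_fun_smul, circleAverage_re_eq_re_of_differentiableOn hr hF, smul_eq_mul,
        mul_assoc]
  exact le_of_mul_le_mul_left key (pow_pos hr n)

theorem norm_coeff_le_two_mul_re_of_re_nonneg (hF : HasFPowerSeriesOnBall F p 0 1)
    (hre : ∀ z ∈ ball (0 : ℂ) 1, 0 ≤ (F z).re) {n : ℕ} (hn : n ≠ 0) :
    ‖p.coeff n‖ ≤ 2 * (F 0).re := by
  have hlim : Tendsto (fun r : ℝ ↦ r ^ n * ‖p.coeff n‖) (𝓝[<] 1) (𝓝 ‖p.coeff n‖) := by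
    have hc : Continuous fun r : ℝ ↦ r ^ n * ‖p.coeff n‖ := by fun_prop
    simpa using hc.continuousAt.tendsto.mono_left (nhdsWithin_le_nhds (a := (1 : ℝ)))
  refine le_of_tendsto hlim ?_
  filter_upwards [Ioo_mem_nhdsLT zero_lt_one] with r ⟨hr0, hr1⟩
  refine pow_mul_norm_coeff_le_two_mul_re hF.hasFPowerSeriesAt hr0 ?_
    (fun z hz ↦ hre z (sphere_subset_ball hr1 hz)) hn
  refine hF.differentiableOn.mono ((closedBall_subset_ball hr1).trans ?_)
  rw [← ENNReal.coe_one, Metric.eball_coe, NNReal.coe_one]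

end Caratheodory

theorem re_add_mul_pos_of_norm_lt {A B ε : ℂ} (h : ‖B‖ < A.re) (hε : ‖ε‖ ≤ 1) :
    0 < (A + ε * B).re := by
  have h₁ : -‖ε * B‖ ≤ (ε * B).re := neg_le_of_abs_le (abs_re_le_norm _)
  have h₂ : ‖ε * B‖ ≤ ‖B‖ := by
    rw [norm_mul]; exact mul_le_of_le_one_left (norm_nonneg _) hε
  rw [add_re]; linarith

theorem norm_coeff_add_mul_coeff_le {α : ℝ} (hα : 0 ≤ α)
    {h g : ℂ → ℂ} {a b : ℕ → ℂ} (ha1 : a 1 = 1) (hb1 : b 1 = 0)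
    (hh : ∀ z ∈ ball (0 : ℂ) 1, HasSum (fun n ↦ a n * z ^ n) (h z))
    (hg : ∀ z ∈ ball (0 : ℂ) 1, HasSum (fun n ↦ b n * z ^ n) (g z))
    (hmem : ∀ z ∈ ball (0 : ℂ) 1,
      ‖deriv g z + (α : ℂ) * z * deriv (deriv g) z‖
        < (deriv h z + (α : ℂ) * z * deriv (deriv h) z).re)
    {ε : ℂ} (hε : ‖ε‖ ≤ 1) {n : ℕ} (hn : 2 ≤ n) :
    ‖a n + ε * b n‖ ≤ 2 / (α * n ^ 2 + n * (1 - α)) := by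
  set F : ℂ → ℂ := fun z ↦ (deriv h z + α * z * deriv (deriv h) z)
    + ε * (deriv g z + α * z * deriv (deriv g) z)
  set w : ℕ → ℂ := fun m ↦ (m + 1) * (1 + α * m) * (a (m + 1) + ε * b (m + 1))
  have hF : HasFPowerSeriesOnBall F (ofScalars ℂ w) 0 1 := by
    refine hasFPowerSeriesOnBall_ofScalars_of_hasSum one_pos fun z hz ↦ ?_
    have hh' := hasSum_deriv_add_mul_deriv_deriv_of_hasSum one_pos α hh z hz
    have hg' := hasSum_deriv_add_mul_deriv_deriv_of_hasSum one_pos α hg z hz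
    exact (hh'.add (hg'.mul_left ε)).congr_fun fun m ↦ by simp only [w]; ring
  have hF0 : F 0 = 1 := by
    rw [← hF.coeff_zero (fun _ ↦ 0)]
    simp [w, ha1, hb1]
  have hcar := norm_coeff_le_two_mul_re_of_re_nonneg hF
    (fun z hz ↦ (re_add_mul_pos_of_norm_lt (hmem z hz) hε).le) (n := n - 1) (by omega)
  obtain ⟨m, rfl⟩ : ∃ m, n = m + 1 := ⟨n - 1, by omega⟩
  have hw : ‖w m‖ = (m + 1) * (1 + α * m) * ‖a (m + 1) + ε * b (m + 1)‖ := by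
    rw [show w m = (((m + 1) * (1 + α * m) : ℝ) : ℂ) * (a (m + 1) + ε * b (m + 1)) by
      simp only [w]; push_cast; ring, norm_mul, norm_real, Real.norm_of_nonneg (by positivity)]
  rw [coeff_ofScalars, Nat.add_sub_cancel, hw, hF0, one_re] at hcar
  have hden :
      α * ((m + 1 : ℕ) : ℝ) ^ 2 + ((m + 1 : ℕ) : ℝ) * (1 - α) = (m + 1) * (1 + α * m) := by
    push_cast; ring
  rw [hden, le_div_iff₀ (by positivity)]
  linarith

theorem exists_norm_eq_one_norm_add_mul_eq (a b : ℂ) :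
    ∃ ε : ℂ, ‖ε‖ = 1 ∧ ‖a + ε * b‖ = ‖a‖ + ‖b‖ := by
  rcases eq_or_ne a 0 with rfl | ha
  · exact ⟨1, by simp⟩
  rcases eq_or_ne b 0 with rfl | hb
  · exact ⟨1, by simp⟩
  have ha' : (‖a‖ : ℂ) ≠ 0 := by simpa using ha
  refine ⟨a / b * (‖b‖ / ‖a‖), ?_, ?_⟩
  · simp [field, norm_ne_zero_iff.mpr ha, norm_ne_zero_iff.mpr hb]
  · rw [show a + a / b * (‖b‖ / ‖a‖) * b = ((‖a‖ + ‖b‖) / ‖a‖ : ℝ) * a by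
      push_cast; field_simp, norm_mul, norm_real, Real.norm_of_nonneg (by positivity)]
    field_simp [norm_ne_zero_iff.mpr ha]

theorem stmt_7_general
    (α : ℝ) (hα : 0 ≤ α)
    (h g : ℂ → ℂ) (a b : ℕ → ℂ)
    (ha1 : a 1 = 1) (hb1 : b 1 = 0)
    (hh : ∀ z ∈ Metric.ball (0:ℂ) 1, HasSum (fun n : ℕ => a n * z ^ n) (h z))
    (hg : ∀ z ∈ Metric.ball (0:ℂ) 1, HasSum (fun n : ℕ => b n * z ^ n) (g z))
    (hmem : ∀ z ∈ Metric.ball (0:ℂ) 1,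
      ‖deriv g z + (α:ℂ) * z * deriv (deriv g) z‖
        < (deriv h z + (α:ℂ) * z * deriv (deriv h) z).re) :
    ∀ n : ℕ, 2 ≤ n →
      ‖a n‖ + ‖b n‖ ≤ 2 / (α * (n:ℝ) ^ 2 + (n:ℝ) * (1 - α)) ∧
      |‖a n‖ - ‖b n‖| ≤ 2 / (α * (n:ℝ) ^ 2 + (n:ℝ) * (1 - α)) ∧
      ‖a n‖ ≤ 2 / (α * (n:ℝ) ^ 2 + (n:ℝ) * (1 - α)) := by
  intro n hn
  obtain ⟨ε, hε, hnorm⟩ := exists_norm_eq_one_norm_add_mul_eq (a n) (b n)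
  have hbound := norm_coeff_add_mul_coeff_le hα ha1 hb1 hh hg hmem hε.le hn
  rw [hnorm] at hbound
  have ha := norm_nonneg (a n)
  have hb := norm_nonneg (b n)
  exact ⟨hbound, abs_le.mpr ⟨by linarith, by linarith⟩, by linarith⟩

theorem stmt_7
    (α : ℝ) (hα : 0 ≤ α)
    (h g : ℂ → ℂ) (a b : ℕ → ℂ)
    (ha0 : a 0 = 0) (ha1 : a 1 = 1) (hb0 : b 0 = 0) (hb1 : b 1 = 0)
    (hh : ∀ z ∈ Metric.ball (0:ℂ) 1, HasSum (fun n : ℕ => a n * z ^ n) (h z))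
    (hg : ∀ z ∈ Metric.ball (0:ℂ) 1, HasSum (fun n : ℕ => b n * z ^ n) (g z))
    (hmem : ∀ z ∈ Metric.ball (0:ℂ) 1,
      ‖deriv g z + (α:ℂ) * z * deriv (deriv g) z‖
        < (deriv h z + (α:ℂ) * z * deriv (deriv h) z).re) :
    ∀ n : ℕ, 2 ≤ n →
      ‖a n‖ + ‖b n‖ ≤ 2 / (α * (n:ℝ) ^ 2 + (n:ℝ) * (1 - α)) ∧
      |‖a n‖ - ‖b n‖| ≤ 2 / (α * (n:ℝ) ^ 2 + (n:ℝ) * (1 - α)) ∧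
      ‖a n‖ ≤ 2 / (α * (n:ℝ) ^ 2 + (n:ℝ) * (1 - α)) :=
  stmt_7_general α hα h g a b ha1 hb1 hh hg hmem
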